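/- Let A = A_C(Λ) be a non-degenerate code algebra, and assume it is NOT the case that C = {𝟎, 𝟏, α, α^c} with |α| = 1 and a_{i,α} = 1 for the unique i ∈ supp(α). Then A admits a Frobenius form if and only if there exist constants λ₁, …, λₙ ∈ 𝔽, not all zero, such that: (1) for each α ∈ C*, the quantity λ_α := (c_{i,α}/a_{i,α})·λ_i is independent of the choice of i ∈ supp(α); and (2) b_{α,β}·λ_γ = b_{α,γ}·λ_β = b_{β,γ}·λ_α whenever α, β, γ ∈ C* satisfy α + β = γ. Moreover, when a Frobenius form exists it is uniquely determined by the λ_i and is given by (t_i, t_j) = δ_{ij} λ_i, (t_i, e^α) = 0, and (e^α, e^β) = δ_{α,β} λ_α. -/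

import Mathlib

/-!
A Frobenius form B is forced to be diagonal in the basis {tᵢ, e^α}. Associativity against a
suitable tⱼ kills B(tᵢ, tⱼ) for i ≠ j and B(e^α, e^β) for α ≠ β (take j in exactly one of the
supports). For B(tᵢ, e^α): a point j ≠ i of supp α gives a_{j,α} B(tᵢ, e^α) = B(tᵢtⱼ, e^α) = 0;
if supp α = {i}, then tᵢ² = tᵢ gives it unless a_{i,α} = 1, and outside the exceptional code
e^α is a non-zero multiple of some e^β e^γ with e^β ⟂ e^γ. On the diagonal,
B(tᵢ, e^α e^α) = B(tᵢ e^α, e^α) gives c_{i,α} λᵢ = a_{i,α} λ_α, and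
B(e^α, e^β e^γ) = B(e^α e^β, e^γ) gives condition (2).

Conversely, the diagonal form with weights λᵢ, λ_α is symmetric, so associativity becomes the
cyclic identity B(u, vw) = B(w, uv), which on basis triples is exactly (1) and (2).
-/

abbrev Word (n : ℕ) := Fin n → ZMod 2

def wsupp {n : ℕ} (α : Word n) : Finset (Fin n) :=
  Finset.univ.filter fun i => α i = 1

def dotW {n : ℕ} (u v : Word n) : ZMod 2 := ∑ i, u i * v i

def IsStar {n : ℕ} (C : Submodule (ZMod 2) (Word n)) (α : Word n) : Prop :=
  α ∈ C ∧ α ≠ 0 ∧ α ≠ 1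

structure CodeAlgebra (F : Type*) [Field F] {n : ℕ} (C : Submodule (ZMod 2) (Word n))
    (a : Fin n → Word n → F) (b : Word n → Word n → F) (c : Fin n → Word n → F)
    (A : Type*) [AddCommGroup A] [Module F A] where
  mul : A →ₗ[F] A →ₗ[F] A
  t : Fin n → A
  e : Word n → A
  bas : Module.Basis (Fin n ⊕ {α : Word n // IsStar C α}) F A
  bas_t : ∀ i, bas (Sum.inl i) = t i
  bas_e : ∀ α, bas (Sum.inr α) = e α.1
  mul_comm : ∀ x y : A, mul x y = mul y x
  t_mul_t : ∀ i j, mul (t i) (t j) = if i = j then t i else 0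
  t_mul_e : ∀ (i : Fin n) (α : Word n), IsStar C α →
    mul (t i) (e α) = if α i = 1 then a i α • e α else 0
  e_mul_e : ∀ (α β : Word n), IsStar C α → IsStar C β → α ≠ β → α + β ≠ 1 →
    mul (e α) (e β) = b α β • e (α + β)
  e_mul_self : ∀ (α : Word n), IsStar C α →
    mul (e α) (e α) = ∑ i ∈ wsupp α, c i α • t i
  e_mul_compl : ∀ (α β : Word n), IsStar C α → IsStar C β → α + β = 1 →
    mul (e α) (e β) = 0

def Nondeg {F : Type*} [Field F] {n : ℕ} (C : Submodule (ZMod 2) (Word n))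
    (a : Fin n → Word n → F) (b : Word n → Word n → F) (c : Fin n → Word n → F) : Prop :=
  (∀ i : Fin n, ∃ α ∈ C, α i = 1) ∧ (∃ α, IsStar C α) ∧
  (∀ i α, IsStar C α → α i = 1 → a i α ≠ 0) ∧
  (∀ α β, IsStar C α → IsStar C β → α ≠ β → α + β ≠ 1 → b α β ≠ 0) ∧
  (∀ i α, IsStar C α → α i = 1 → c i α ≠ 0)

lemma zmod_two_eq_zero_of_ne_one {x : ZMod 2} (h : x ≠ 1) : x = 0 := by
  revert x; decide

namespace Word

variable {n : ℕ}

lemma exists_eq_one_of_ne_zero {α : Word n} (h : α ≠ 0) : ∃ i, α i = 1 := by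
  by_contra! hα
  exact h (funext fun i => zmod_two_eq_zero_of_ne_one (hα i))

lemma add_eq_zero_iff_eq {α β : Word n} : α + β = 0 ↔ α = β := by
  rw [← ZModModule.sub_eq_add, sub_eq_zero]

lemma add_eq_iff_eq_add {α β γ : Word n} : α + β = γ ↔ α = β + γ := by
  rw [← ZModModule.sub_eq_add, sub_eq_iff_eq_add']

end Word

lemma IsStar.add {n : ℕ} {C : Submodule (ZMod 2) (Word n)} {α β : Word n}
    (hα : IsStar C α) (hβ : IsStar C β) (hne : α ≠ β) (h1 : α + β ≠ 1) : IsStar C (α + β) :=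
  ⟨C.add_mem hα.1 hβ.1, fun h => hne (Word.add_eq_zero_iff_eq.mp h), h1⟩

section FrobeniusForm

variable {R A ι : Type*} [CommSemiring R] [AddCommMonoid A] [Module R A]

def IsFrobeniusForm (mul : A →ₗ[R] A →ₗ[R] A) (B : A →ₗ[R] A →ₗ[R] R) : Prop :=
  ∀ x y z, B x (mul y z) = B (mul x y) z

variable {mul : A →ₗ[R] A →ₗ[R] A} {B : A →ₗ[R] A →ₗ[R] R}

lemma IsFrobeniusForm.flip (hcomm : ∀ x y, mul x y = mul y x) (hB : IsFrobeniusForm mul B) :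
    IsFrobeniusForm mul B.flip := fun x y z => by
  simp only [LinearMap.flip_apply]
  rw [hcomm y z, ← hB, hcomm x y]

lemma isFrobeniusForm_of_basis (bas : Module.Basis ι R A)
    (hsymm : ∀ u v, B (bas u) (bas v) = B (bas v) (bas u))
    (hcyc : ∀ u v w, B (bas u) (mul (bas v) (bas w)) = B (bas w) (mul (bas u) (bas v))) :
    IsFrobeniusForm mul B := by
  have hflip : B.flip = B := LinearMap.ext_basis bas bas fun u v => hsymm v u
  have hcyc' : ∀ x y z, B x (mul y z) = B z (mul x y) := by
    intro x y z
    have hbasis : ∀ u v, (B (bas u)).comp (mul (bas v)) = B.flip (mul (bas u) (bas v)) :=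
      fun u v => bas.ext fun w => hcyc u v w
    have h := LinearMap.ext_basis bas bas (B := B.compl₂ (mul.flip z)) (B' := mul.compr₂ (B z))
      fun u v => by simpa using LinearMap.congr_fun (hbasis u v) z
    simpa using LinearMap.congr_fun₂ h x y
  intro x y z
  rw [hcyc', ← LinearMap.flip_apply B, hflip]

end FrobeniusForm

def IsExceptional {F : Type*} [One F] {n : ℕ} (C : Submodule (ZMod 2) (Word n))
    (a : Fin n → Word n → F) : Prop :=
  ∃ α : Word n, IsStar C α ∧ (C : Set (Word n)) = {0, 1, α, 1 + α} ∧
    (wsupp α).card = 1 ∧ (∀ i, α i = 1 → a i α = 1)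

lemma exists_isStar_ne_of_not_isExceptional {F : Type*} [One F] {n : ℕ}
    {C : Submodule (ZMod 2) (Word n)} {a : Fin n → Word n → F}
    (hcover : ∀ i, ∃ α ∈ C, α i = 1) (hexc : ¬ IsExceptional C a)
    {α : Word n} (hα : IsStar C α) {i : Fin n} (hsupp : wsupp α = {i}) (ha : a i α = 1) :
    ∃ β, IsStar C β ∧ β ≠ α ∧ β ≠ 1 + α := by
  by_contra! hC
  have hsub : ∀ β ∈ C, β = 0 ∨ β = 1 ∨ β = α ∨ β = 1 + α := by
    intro β hβ
    by_contra! hne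
    exact hne.2.2.2 (hC β ⟨hβ, hne.1, hne.2.1⟩ hne.2.2.1)
  -- a codeword covering a coordinate outside supp α can only be 1 or 1 + α
  have hone : (1 : Word n) ∈ C := by
    obtain ⟨j, hj⟩ := Function.ne_iff.mp hα.2.2
    obtain ⟨γ, hγ, hγj⟩ := hcover j
    rcases hsub γ hγ with rfl | rfl | rfl | rfl
    · simp at hγj
    · exact hγ
    · exact absurd hγj hj
    · simpa [add_assoc, ZModModule.add_self] using C.add_mem hγ hα.1
  refine hexc ⟨α, hα, Set.ext fun β => ⟨fun hβ => by simpa using hsub β hβ, ?_⟩, by simp [hsupp],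
    fun j hj => ?_⟩
  · rintro (rfl | rfl | rfl | rfl)
    exacts [C.zero_mem, hone, hα.1, C.add_mem hone hα.1]
  · have hj' : j ∈ wsupp α := by simpa [wsupp] using hj
    rw [hsupp, Finset.mem_singleton] at hj'
    rwa [hj']

namespace IsFrobeniusForm

variable {F : Type*} [Field F] {n : ℕ} {C : Submodule (ZMod 2) (Word n)}
  {a : Fin n → Word n → F} {b : Word n → Word n → F} {c : Fin n → Word n → F}
  {A : Type*} [AddCommGroup A] [Module F A] {CA : CodeAlgebra F C a b c A}
  {B : A →ₗ[F] A →ₗ[F] F}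

lemma apply_t_t_of_ne (hB : IsFrobeniusForm CA.mul B) {i j : Fin n} (h : i ≠ j) :
    B (CA.t i) (CA.t j) = 0 := by
  simpa [CA.t_mul_t, h] using hB (CA.t i) (CA.t j) (CA.t j)

lemma apply_e_e_of_ne (hB : IsFrobeniusForm CA.mul B)
    (ha : ∀ i α, IsStar C α → α i = 1 → a i α ≠ 0) {α β : Word n}
    (hα : IsStar C α) (hβ : IsStar C β) (hne : α ≠ β) : B (CA.e α) (CA.e β) = 0 := by
  obtain ⟨j, hj⟩ := Function.ne_iff.mp hne
  have key := hB (CA.e α) (CA.t j) (CA.e β)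
  rw [CA.mul_comm (CA.e α), CA.t_mul_e j α hα, CA.t_mul_e j β hβ] at key
  split_ifs at key with hβj hαj hαj
  · exact absurd (hαj.trans hβj.symm) hj
  · simpa [ha j β hβ hβj] using key
  · simpa [ha j α hα hαj] using key.symm
  · exact absurd ((zmod_two_eq_zero_of_ne_one hαj).trans (zmod_two_eq_zero_of_ne_one hβj).symm) hj

lemma apply_e_self (hB : IsFrobeniusForm CA.mul B)
    (ha : ∀ i α, IsStar C α → α i = 1 → a i α ≠ 0) {α : Word n} (hα : IsStar C α)
    {i : Fin n} (hi : α i = 1) :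
    B (CA.e α) (CA.e α) = c i α / a i α * B (CA.t i) (CA.t i) := by
  have key := hB (CA.t i) (CA.e α) (CA.e α)
  rw [CA.e_mul_self α hα, CA.t_mul_e i α hα, if_pos hi, map_sum,
    Finset.sum_eq_single i
      (fun j _ hji => by rw [map_smul, hB.apply_t_t_of_ne hji.symm, smul_zero])
      (by simp [wsupp, hi])] at key
  simp only [map_smul, smul_eq_mul, LinearMap.smul_apply] at key
  rw [div_mul_eq_mul_div, eq_div_iff (ha i α hα hi)]
  linear_combination -key

lemma apply_t_e_of_ne_of_eq_one (hB : IsFrobeniusForm CA.mul B)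
    (ha : ∀ i α, IsStar C α → α i = 1 → a i α ≠ 0) {α : Word n} (hα : IsStar C α)
    {i j : Fin n} (hji : j ≠ i) (hj : α j = 1) : B (CA.t i) (CA.e α) = 0 := by
  have key := hB (CA.t i) (CA.t j) (CA.e α)
  rw [CA.t_mul_e j α hα, if_pos hj, CA.t_mul_t, if_neg hji.symm] at key
  simpa [ha j α hα hj] using key

lemma apply_t_e_of_a_ne_one (hB : IsFrobeniusForm CA.mul B) {α : Word n} (hα : IsStar C α)
    {i : Fin n} (hi : α i = 1) (ha : a i α ≠ 1) : B (CA.t i) (CA.e α) = 0 := by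
  have key := hB (CA.t i) (CA.t i) (CA.e α)
  rw [CA.t_mul_e i α hα, if_pos hi, CA.t_mul_t, if_pos rfl, map_smul, smul_eq_mul] at key
  have : (a i α - 1) * B (CA.t i) (CA.e α) = 0 := by linear_combination key
  exact (mul_eq_zero.mp this).resolve_left (sub_ne_zero.mpr ha)

lemma apply_t_e_of_eq_add (hB : IsFrobeniusForm CA.mul B)
    (ha : ∀ i α, IsStar C α → α i = 1 → a i α ≠ 0)
    (hb : ∀ α β, IsStar C α → IsStar C β → α ≠ β → α + β ≠ 1 → b α β ≠ 0)
    {α β γ : Word n} (hα : IsStar C α) (hβ : IsStar C β) (hγ : IsStar C γ) (hne : β ≠ γ)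
    (hsum : β + γ = α) (i : Fin n) : B (CA.t i) (CA.e α) = 0 := by
  have hβγ1 : β + γ ≠ 1 := hsum ▸ hα.2.2
  have key := hB (CA.t i) (CA.e β) (CA.e γ)
  have hright : B (CA.mul (CA.t i) (CA.e β)) (CA.e γ) = 0 := by
    rw [CA.t_mul_e i β hβ]
    split_ifs <;> simp [hB.apply_e_e_of_ne ha hβ hγ hne]
  rw [CA.e_mul_e β γ hβ hγ hne hβγ1, hsum, map_smul, smul_eq_mul, hright] at key
  exact (mul_eq_zero.mp key).resolve_left (hb β γ hβ hγ hne hβγ1)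

lemma apply_t_e (hB : IsFrobeniusForm CA.mul B) (hnd : Nondeg C a b c)
    (hexc : ¬ IsExceptional C a) {α : Word n} (hα : IsStar C α) (i : Fin n) :
    B (CA.t i) (CA.e α) = 0 := by
  by_cases hsupp : ∀ j, α j = 1 → j = i
  swap
  · push Not at hsupp
    obtain ⟨j, hj, hji⟩ := hsupp
    exact hB.apply_t_e_of_ne_of_eq_one hnd.2.2.1 hα hji hj
  have hi : α i = 1 := by
    obtain ⟨j, hj⟩ := Word.exists_eq_one_of_ne_zero hα.2.1
    rwa [← hsupp j hj]
  by_cases ha : a i α = 1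
  · have hwsupp : wsupp α = {i} := by
      ext j
      simpa [wsupp] using ⟨fun hj => hsupp j hj, fun hji => hji ▸ hi⟩
    obtain ⟨β, hβ, hβα, hβα'⟩ := exists_isStar_ne_of_not_isExceptional hnd.1 hexc hα hwsupp ha
    have hβα1 : β + α ≠ 1 := fun h => hβα' (by rw [Word.add_eq_iff_eq_add.mp h, add_comm])
    refine hB.apply_t_e_of_eq_add hnd.2.2.1 hnd.2.2.2.1 hα hβ (hβ.add hα hβα hβα1) ?_ ?_ i
    · intro h
      exact hα.2.1 (by rw [← Word.add_eq_iff_eq_add.mpr h, ZModModule.add_self])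
    · rw [← add_assoc, ZModModule.add_self, zero_add]
  · exact hB.apply_t_e_of_a_ne_one hα hi ha

lemma apply_e_t (hB : IsFrobeniusForm CA.mul B) (hnd : Nondeg C a b c)
    (hexc : ¬ IsExceptional C a) {α : Word n} (hα : IsStar C α) (i : Fin n) :
    B (CA.e α) (CA.t i) = 0 :=
  (hB.flip CA.mul_comm).apply_t_e hnd hexc hα i

lemma b_mul_apply_e_self (hB : IsFrobeniusForm CA.mul B) {α β : Word n} (hα : IsStar C α)
    (hβ : IsStar C β) (hγ : IsStar C (α + β)) :
    b α β * B (CA.e (α + β)) (CA.e (α + β)) = b α (α + β) * B (CA.e β) (CA.e β) ∧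
      b α (α + β) * B (CA.e β) (CA.e β) = b β (α + β) * B (CA.e α) (CA.e α) := by
  have hβ_add : β + (α + β) = α := by rw [add_left_comm, ZModModule.add_self, add_zero]
  have hα_add : α + (α + β) = β := by rw [← add_assoc, ZModModule.add_self, zero_add]
  have hαβ : α ≠ β := fun h => hγ.2.1 (by rw [h, ZModModule.add_self])
  have hβγ : β ≠ α + β := fun h => hα.2.1 (by rw [← hβ_add, ← h, ZModModule.add_self])
  have hαγ : α ≠ α + β := fun h => hβ.2.1 (by rw [← hα_add, ← h, ZModModule.add_self])
  have hα_assoc := hB (CA.e α) (CA.e β) (CA.e (α + β))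
  rw [CA.e_mul_e β _ hβ hγ hβγ (by rw [hβ_add]; exact hα.2.2), hβ_add,
    CA.e_mul_e α β hα hβ hαβ hγ.2.2] at hα_assoc
  have hβ_assoc := hB (CA.e β) (CA.e α) (CA.e (α + β))
  rw [CA.e_mul_e α _ hα hγ hαγ (by rw [hα_add]; exact hβ.2.2), hα_add, CA.mul_comm,
    CA.e_mul_e α β hα hβ hαβ hγ.2.2] at hβ_assoc
  simp only [map_smul, LinearMap.smul_apply, smul_eq_mul] at hα_assoc hβ_assoc
  exact ⟨hβ_assoc.symm, hβ_assoc.trans hα_assoc.symm⟩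

lemma ext {B' : A →ₗ[F] A →ₗ[F] F} (hB : IsFrobeniusForm CA.mul B)
    (hB' : IsFrobeniusForm CA.mul B') (hnd : Nondeg C a b c) (hexc : ¬ IsExceptional C a)
    (h : ∀ i, B (CA.t i) (CA.t i) = B' (CA.t i) (CA.t i)) : B = B' := by
  refine LinearMap.ext_basis CA.bas CA.bas ?_
  rintro (i | ⟨α, hα⟩) (j | ⟨β, hβ⟩) <;> simp only [CA.bas_t, CA.bas_e]
  · rcases eq_or_ne i j with rfl | hij
    · exact h i
    · rw [hB.apply_t_t_of_ne hij, hB'.apply_t_t_of_ne hij]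
  · rw [hB.apply_t_e hnd hexc hβ, hB'.apply_t_e hnd hexc hβ]
  · rw [hB.apply_e_t hnd hexc hα, hB'.apply_e_t hnd hexc hα]
  · rcases eq_or_ne α β with rfl | hαβ
    · obtain ⟨i, hi⟩ := Word.exists_eq_one_of_ne_zero hα.2.1
      rw [hB.apply_e_self hnd.2.2.1 hα hi, hB'.apply_e_self hnd.2.2.1 hα hi, h i]
    · rw [hB.apply_e_e_of_ne hnd.2.2.1 hα hβ hαβ, hB'.apply_e_e_of_ne hnd.2.2.1 hα hβ hαβ]

end IsFrobeniusForm

section Construction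

variable {F : Type*} [Field F] {n : ℕ} {C : Submodule (ZMod 2) (Word n)}
  {a : Fin n → Word n → F} {b : Word n → Word n → F} {c : Fin n → Word n → F}
  {A : Type*} [AddCommGroup A] [Module F A]

-- The paper's λ_α, computed at an arbitrarily chosen point of supp α.
noncomputable def wordWeight (a c : Fin n → Word n → F) (lam : Fin n → F) (α : Word n) : F :=
  if h : ∃ i, α i = 1 then c h.choose α / a h.choose α * lam h.choose else 0

lemma wordWeight_eq {lam : Fin n → F}
    (h : ∀ α, IsStar C α → ∀ i j, α i = 1 → α j = 1 →
      c i α / a i α * lam i = c j α / a j α * lam j)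
    {α : Word n} (hα : IsStar C α) {i : Fin n} (hi : α i = 1) :
    wordWeight a c lam α = c i α / a i α * lam i := by
  have hex : ∃ j, α j = 1 := ⟨i, hi⟩
  rw [wordWeight, dif_pos hex]
  exact h α hα _ i hex.choose_spec hi

namespace CodeAlgebra

variable (CA : CodeAlgebra F C a b c A) (lam : Fin n → F)

open Classical in
noncomputable def frobeniusForm : A →ₗ[F] A →ₗ[F] F :=
  Matrix.toLinearMap₂ CA.bas CA.bas
    (Matrix.diagonal (Sum.elim lam fun α => wordWeight a c lam α.1))

lemma frobeniusForm_bas (u v : Fin n ⊕ {α : Word n // IsStar C α}) :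
    CA.frobeniusForm lam (CA.bas u) (CA.bas v) =
      if u = v then Sum.elim lam (fun α => wordWeight a c lam α.1) u else 0 := by
  classical
  rw [frobeniusForm, Matrix.toLinearMap₂_apply_basis, Matrix.diagonal_apply]

@[simp] lemma frobeniusForm_t_t (i j : Fin n) :
    CA.frobeniusForm lam (CA.t i) (CA.t j) = if i = j then lam i else 0 := by
  simpa [CA.bas_t] using CA.frobeniusForm_bas lam (.inl i) (.inl j)

lemma frobeniusForm_t_e (i : Fin n) {α : Word n} (hα : IsStar C α) :
    CA.frobeniusForm lam (CA.t i) (CA.e α) = 0 := by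
  simpa [CA.bas_t, CA.bas_e] using CA.frobeniusForm_bas lam (.inl i) (.inr ⟨α, hα⟩)

lemma frobeniusForm_e_t {α : Word n} (hα : IsStar C α) (i : Fin n) :
    CA.frobeniusForm lam (CA.e α) (CA.t i) = 0 := by
  simpa [CA.bas_t, CA.bas_e] using CA.frobeniusForm_bas lam (.inr ⟨α, hα⟩) (.inl i)

lemma frobeniusForm_e_e {α β : Word n} (hα : IsStar C α) (hβ : IsStar C β) :
    CA.frobeniusForm lam (CA.e α) (CA.e β) = if α = β then wordWeight a c lam α else 0 := by
  simpa [CA.bas_e] using CA.frobeniusForm_bas lam (.inr ⟨α, hα⟩) (.inr ⟨β, hβ⟩)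

lemma frobeniusForm_t_mul_e_e (i : Fin n) {β γ : Word n} (hβ : IsStar C β) (hγ : IsStar C γ) :
    CA.frobeniusForm lam (CA.t i) (CA.mul (CA.e β) (CA.e γ)) =
      if β = γ ∧ β i = 1 then c i β * lam i else 0 := by
  by_cases hβγ : β = γ
  · subst hβγ
    rw [CA.e_mul_self β hβ, map_sum]
    simp [wsupp]
  by_cases hβγ1 : β + γ = 1
  · simp [CA.e_mul_compl β γ hβ hγ hβγ1, hβγ]
  · simp [CA.e_mul_e β γ hβ hγ hβγ hβγ1, CA.frobeniusForm_t_e lam i (hβ.add hγ hβγ hβγ1), hβγ]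

lemma frobeniusForm_e_mul_t_e {α : Word n} (hα : IsStar C α) (j : Fin n) {γ : Word n}
    (hγ : IsStar C γ) :
    CA.frobeniusForm lam (CA.e α) (CA.mul (CA.t j) (CA.e γ)) =
      if α = γ ∧ α j = 1 then a j α * wordWeight a c lam α else 0 := by
  rw [CA.t_mul_e j γ hγ]
  by_cases hαγ : α = γ
  · subst hαγ
    by_cases hj : α j = 1 <;> simp [hj, CA.frobeniusForm_e_e lam hα hα]
  · split_ifs <;> simp_all [CA.frobeniusForm_e_e lam hα hγ]

lemma frobeniusForm_e_mul_e_e {α β γ : Word n} (hα : IsStar C α) (hβ : IsStar C β)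
    (hγ : IsStar C γ) :
    CA.frobeniusForm lam (CA.e α) (CA.mul (CA.e β) (CA.e γ)) =
      if α = β + γ then b β γ * wordWeight a c lam α else 0 := by
  by_cases hβγ : β = γ
  · subst hβγ
    rw [CA.e_mul_self β hβ, map_sum, ZModModule.add_self, if_neg hα.2.1]
    simp [CA.frobeniusForm_e_t lam hα]
  by_cases hβγ1 : β + γ = 1
  · simp [CA.e_mul_compl β γ hβ hγ hβγ1, hβγ1, hα.2.2]
  · simp [CA.e_mul_e β γ hβ hγ hβγ hβγ1, CA.frobeniusForm_e_e lam hα (hβ.add hγ hβγ hβγ1)]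

lemma frobeniusForm_cyclic
    (hweight : ∀ α i, IsStar C α → α i = 1 → a i α * wordWeight a c lam α = c i α * lam i)
    (hb : ∀ α β, IsStar C α → IsStar C β → IsStar C (α + β) →
      b α β * wordWeight a c lam (α + β) = b β (α + β) * wordWeight a c lam α)
    (u v w : Fin n ⊕ {α : Word n // IsStar C α}) :
    CA.frobeniusForm lam (CA.bas u) (CA.mul (CA.bas v) (CA.bas w)) =
      CA.frobeniusForm lam (CA.bas w) (CA.mul (CA.bas u) (CA.bas v)) := by
  rcases u with i | ⟨α, hα⟩ <;> rcases v with j | ⟨β, hβ⟩ <;> rcases w with k | ⟨γ, hγ⟩ <;>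
    simp only [CA.bas_t, CA.bas_e]
  · simp only [CA.t_mul_t]
    split_ifs <;> grind [frobeniusForm_t_t]
  · rw [CA.t_mul_e j γ hγ, CA.t_mul_t]
    split_ifs <;> simp [CA.frobeniusForm_t_e lam _ hγ, CA.frobeniusForm_e_t lam hγ]
  · rw [CA.mul_comm, CA.t_mul_e k β hβ, CA.t_mul_e i β hβ]
    split_ifs <;> simp [CA.frobeniusForm_t_e lam _ hβ]
  · rw [CA.frobeniusForm_t_mul_e_e lam i hβ hγ, CA.frobeniusForm_e_mul_t_e lam hγ i hβ]
    by_cases hβγ : β = γ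
    · subst hβγ
      by_cases hi : β i = 1 <;> simp [hi, hweight β i hβ]
    · simp [hβγ, Ne.symm hβγ]
  · rw [CA.t_mul_t, CA.mul_comm, CA.t_mul_e j α hα]
    split_ifs <;> simp [CA.frobeniusForm_t_e lam _ hα, CA.frobeniusForm_e_t lam hα]
  · rw [CA.frobeniusForm_e_mul_t_e lam hα j hγ, CA.mul_comm,
      CA.frobeniusForm_e_mul_t_e lam hγ j hα]
    by_cases hαγ : α = γ
    · subst hαγ; rfl
    · simp [hαγ, Ne.symm hαγ]
  · rw [CA.mul_comm, CA.frobeniusForm_e_mul_t_e lam hα k hβ,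
      CA.frobeniusForm_t_mul_e_e lam k hα hβ]
    by_cases hαβ : α = β
    · subst hαβ
      by_cases hk : α k = 1 <;> simp [hk, hweight α k hα]
    · simp [hαβ]
  · rw [CA.frobeniusForm_e_mul_e_e lam hα hβ hγ, CA.frobeniusForm_e_mul_e_e lam hγ hα hβ]
    by_cases hγ_sum : γ = α + β
    · subst hγ_sum
      rw [if_pos rfl, if_pos (Word.add_eq_iff_eq_add.mp rfl), hb α β hα hβ hγ]
    · rw [if_neg hγ_sum, if_neg fun h => hγ_sum (Word.add_eq_iff_eq_add.mpr h).symm]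

lemma isFrobeniusForm_frobeniusForm
    (hweight : ∀ α i, IsStar C α → α i = 1 → a i α * wordWeight a c lam α = c i α * lam i)
    (hb : ∀ α β, IsStar C α → IsStar C β → IsStar C (α + β) →
      b α β * wordWeight a c lam (α + β) = b β (α + β) * wordWeight a c lam α) :
    IsFrobeniusForm CA.mul (CA.frobeniusForm lam) := by
  refine isFrobeniusForm_of_basis CA.bas (fun u v => ?_) (CA.frobeniusForm_cyclic lam hweight hb)
  rw [frobeniusForm_bas, frobeniusForm_bas]
  by_cases h : u = v
  · subst h; rfl
  · rw [if_neg h, if_neg (Ne.symm h)]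

end CodeAlgebra

end Construction

/-- Theorem 3.20: existence and uniqueness of a Frobenius form on a non-degenerate code
algebra (excluding the exceptional case). -/
theorem frobenius_form_characterisation {F : Type*} [Field F] {n : ℕ}
    {C : Submodule (ZMod 2) (Word n)}
    {a : Fin n → Word n → F} {b : Word n → Word n → F} {c : Fin n → Word n → F}
    {A : Type*} [AddCommGroup A] [Module F A]
    (CA : CodeAlgebra F C a b c A)
    (hnd : Nondeg C a b c)
    (hexc : ¬ ∃ α : Word n, IsStar C α ∧ (C : Set (Word n)) = {0, 1, α, 1 + α} ∧
      (wsupp α).card = 1 ∧ (∀ i, α i = 1 → a i α = 1)) :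
    -- existence criterion
    ((∃ B : A →ₗ[F] A →ₗ[F] F, B ≠ 0 ∧
        ∀ x y z : A, B x (CA.mul y z) = B (CA.mul x y) z) ↔
      (∃ lam : Fin n → F, lam ≠ 0 ∧
        (∀ α, IsStar C α → ∀ i j, α i = 1 → α j = 1 →
          c i α / a i α * lam i = c j α / a j α * lam j) ∧
        (∀ α β γ, IsStar C α → IsStar C β → IsStar C γ → α + β = γ →
          ∀ i j k, α i = 1 → β j = 1 → γ k = 1 →
            b α β * (c k γ / a k γ * lam k) = b α γ * (c j β / a j β * lam j) ∧
            b α γ * (c j β / a j β * lam j) = b β γ * (c i α / a i α * lam i)))) ∧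
    -- the form is uniquely determined, diagonal, and given by the λᵢ
    (∀ B : A →ₗ[F] A →ₗ[F] F, B ≠ 0 →
      (∀ x y z : A, B x (CA.mul y z) = B (CA.mul x y) z) →
      ∃ lam : Fin n → F,
        (∀ i j, B (CA.t i) (CA.t j) = if i = j then lam i else 0) ∧
        (∀ i α, IsStar C α → B (CA.t i) (CA.e α) = 0) ∧
        (∀ α β, IsStar C α → IsStar C β → α ≠ β → B (CA.e α) (CA.e β) = 0) ∧
        (∀ α i, IsStar C α → α i = 1 →
          B (CA.e α) (CA.e α) = c i α / a i α * lam i)) := by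
  have ha := hnd.2.2.1
  refine ⟨⟨?_, ?_⟩, ?_⟩
  · rintro ⟨B, hB0, hB : IsFrobeniusForm CA.mul B⟩
    refine ⟨fun i => B (CA.t i) (CA.t i), fun hlam => hB0 ?_, fun α hα i j hi hj => ?_,
      fun α β γ hα hβ hγ hsum i j k hi hj hk => ?_⟩
    · exact hB.ext (fun _ _ _ => rfl) hnd hexc fun i => congrFun hlam i
    · rw [← hB.apply_e_self ha hα hi, ← hB.apply_e_self ha hα hj]
    · subst hsum
      rw [← hB.apply_e_self ha hα hi, ← hB.apply_e_self ha hβ hj, ← hB.apply_e_self ha hγ hk]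
      exact hB.b_mul_apply_e_self hα hβ hγ
  · rintro ⟨lam, hlam, h1, h2⟩
    refine ⟨CA.frobeniusForm lam, fun h0 => hlam (funext fun i => ?_),
      CA.isFrobeniusForm_frobeniusForm lam (fun α i hα hi => ?_) fun α β hα hβ hγ => ?_⟩
    · simpa using congrArg (fun B => B (CA.t i) (CA.t i)) h0
    · rw [wordWeight_eq h1 hα hi]
      field_simp [ha i α hα hi]
    · obtain ⟨i, hi⟩ := Word.exists_eq_one_of_ne_zero hα.2.1
      obtain ⟨j, hj⟩ := Word.exists_eq_one_of_ne_zero hβ.2.1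
      obtain ⟨k, hk⟩ := Word.exists_eq_one_of_ne_zero hγ.2.1
      obtain ⟨h2₁, h2₂⟩ := h2 α β _ hα hβ hγ rfl i j k hi hj hk
      rw [wordWeight_eq h1 hγ hk, wordWeight_eq h1 hα hi]
      exact h2₁.trans h2₂
  · intro B _ (hB : IsFrobeniusForm CA.mul B)
    refine ⟨fun i => B (CA.t i) (CA.t i), fun i j => ?_, fun i α hα => hB.apply_t_e hnd hexc hα i,
      fun α β => hB.apply_e_e_of_ne ha, fun α i hα hi => hB.apply_e_self ha hα hi⟩
    split_ifs with h
    · rw [h]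
    · exact hB.apply_t_t_of_ne h
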